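/- Let C be a bivariate copula admitting a tail dependence function Λ, and let φ : [0,1] → [0,1] be an admissible path, i.e. p² ≤ φ(p) ≤ 1 for all p ∈ [0,1], φ is continuous in a neighborhood of 0, and b := lim_{p↓0} φ(p)/p exists in (0,∞). Then: (1) the φ-tail dependence coefficient χ_φ(C) = lim_{p↓0} C(φ(p), p²/φ(p))/p exists and equals Λ(b, 1/b); (2) the φ-normalized tail dependence coefficient κ_φ(C) = lim_{p↓0} C(φ(p), p²/φ(p)) / min(φ(p), p²/φ(p)) exists and equals Λ(b,1/b)/min(b,1/b); and (3) 0 ≤ χ_φ(C) ≤ κ_φ(C) ≤ 1. -/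

import Mathlib

/-!
A copula is 1-Lipschitz in each variable, so along the path the quantity
`C(φ(p), p²/φ(p)) / p` differs from `C(pb, p/b) / p` by at most
`|φ(p)/p - b| + |p/φ(p) - 1/b|`, which tends to `0`; hence `χ_φ(C) = Λ(b, 1/b)`.
Since `min(φ(p), p²/φ(p)) / p → min(b, 1/b)`, the normalized coefficient is the quotient of
the two limits, and the bounds follow from `0 ≤ C(u,v) ≤ min(u,v)`, which passes to
`0 ≤ Λ(u,v) ≤ min(u,v)`.
-/

open MeasureTheory Filter Set

/-- A bivariate copula: `C : [0,1]² → [0,1]` with the grounded/marginal conditions and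
the 2-increasing property. -/
def IsCopula (C : ℝ → ℝ → ℝ) : Prop :=
  (∀ u ∈ Icc (0:ℝ) 1, ∀ v ∈ Icc (0:ℝ) 1, C u v ∈ Icc (0:ℝ) 1) ∧
  (∀ u ∈ Icc (0:ℝ) 1, C u 0 = 0 ∧ C 0 u = 0 ∧ C u 1 = u ∧ C 1 u = u) ∧
  (∀ u u' v v' : ℝ, u ∈ Icc (0:ℝ) 1 → u' ∈ Icc (0:ℝ) 1 →
    v ∈ Icc (0:ℝ) 1 → v' ∈ Icc (0:ℝ) 1 → u ≤ u' → v ≤ v' →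
    0 ≤ C u' v' - C u' v - C u v' + C u v)

/-- `Λ` is the tail dependence function of `C`:
`Λ(u,v) = lim_{p↓0} C(pu,pv)/p` for every `(u,v) ∈ [0,∞)²`. -/
def HasTDF (C Λ : ℝ → ℝ → ℝ) : Prop :=
  ∀ u v : ℝ, 0 ≤ u → 0 ≤ v →
    Tendsto (fun p : ℝ => C (p * u) (p * v) / p)
      (nhdsWithin (0:ℝ) (Ioi 0)) (nhds (Λ u v))

open Topology

namespace IsCopula

variable {C : ℝ → ℝ → ℝ}

lemma sub_mem_Icc_left (hC : IsCopula C) {u u' v : ℝ} (hu : u ∈ Icc (0:ℝ) 1)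
    (hu' : u' ∈ Icc (0:ℝ) 1) (hv : v ∈ Icc (0:ℝ) 1) (h : u ≤ u') :
    C u' v - C u v ∈ Icc 0 (u' - u) := by
  obtain ⟨-, hmarg, h2⟩ := hC
  have hlow := h2 u u' 0 v hu hu' (left_mem_Icc.2 zero_le_one) hv h hv.1
  have hupp := h2 u u' v 1 hu hu' hv (right_mem_Icc.2 zero_le_one) h hv.2
  obtain ⟨hu0, -, hu1, -⟩ := hmarg u hu
  obtain ⟨hu'0, -, hu'1, -⟩ := hmarg u' hu'
  constructor <;> linarith

lemma sub_mem_Icc_right (hC : IsCopula C) {u v v' : ℝ} (hu : u ∈ Icc (0:ℝ) 1)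
    (hv : v ∈ Icc (0:ℝ) 1) (hv' : v' ∈ Icc (0:ℝ) 1) (h : v ≤ v') :
    C u v' - C u v ∈ Icc 0 (v' - v) := by
  obtain ⟨-, hmarg, h2⟩ := hC
  have hlow := h2 0 u v v' (left_mem_Icc.2 zero_le_one) hu hv hv' hu.1 h
  have hupp := h2 u 1 v v' hu (right_mem_Icc.2 zero_le_one) hv hv' hu.2 h
  obtain ⟨-, hv0, -, hv1⟩ := hmarg v hv
  obtain ⟨-, hv'0, -, hv'1⟩ := hmarg v' hv'
  constructor <;> linarith

lemma abs_sub_le_left (hC : IsCopula C) {u u' v : ℝ} (hu : u ∈ Icc (0:ℝ) 1)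
    (hu' : u' ∈ Icc (0:ℝ) 1) (hv : v ∈ Icc (0:ℝ) 1) :
    |C u v - C u' v| ≤ |u - u'| := by
  wlog h : u ≤ u' generalizing u u'
  · rw [abs_sub_comm, abs_sub_comm u]
    exact this hu' hu (le_of_not_ge h)
  obtain ⟨hlow, hupp⟩ := hC.sub_mem_Icc_left hu hu' hv h
  rw [abs_sub_comm, abs_of_nonneg hlow, abs_sub_comm, abs_of_nonneg (sub_nonneg.2 h)]
  exact hupp

lemma abs_sub_le_right (hC : IsCopula C) {u v v' : ℝ} (hu : u ∈ Icc (0:ℝ) 1)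
    (hv : v ∈ Icc (0:ℝ) 1) (hv' : v' ∈ Icc (0:ℝ) 1) :
    |C u v - C u v'| ≤ |v - v'| := by
  wlog h : v ≤ v' generalizing v v'
  · rw [abs_sub_comm, abs_sub_comm v]
    exact this hv' hv (le_of_not_ge h)
  obtain ⟨hlow, hupp⟩ := hC.sub_mem_Icc_right hu hv hv' h
  rw [abs_sub_comm, abs_of_nonneg hlow, abs_sub_comm, abs_of_nonneg (sub_nonneg.2 h)]
  exact hupp

lemma abs_sub_le (hC : IsCopula C) {u u' v v' : ℝ} (hu : u ∈ Icc (0:ℝ) 1)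
    (hu' : u' ∈ Icc (0:ℝ) 1) (hv : v ∈ Icc (0:ℝ) 1) (hv' : v' ∈ Icc (0:ℝ) 1) :
    |C u v - C u' v'| ≤ |u - u'| + |v - v'| :=
  calc |C u v - C u' v'| ≤ |C u v - C u' v| + |C u' v - C u' v'| := _root_.abs_sub_le _ _ _
    _ ≤ |u - u'| + |v - v'| :=
      add_le_add (hC.abs_sub_le_left hu hu' hv) (hC.abs_sub_le_right hu' hv hv')

lemma nonneg (hC : IsCopula C) {u v : ℝ} (hu : u ∈ Icc (0:ℝ) 1) (hv : v ∈ Icc (0:ℝ) 1) :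
    0 ≤ C u v :=
  (hC.1 u hu v hv).1

lemma le_min (hC : IsCopula C) {u v : ℝ} (hu : u ∈ Icc (0:ℝ) 1) (hv : v ∈ Icc (0:ℝ) 1) :
    C u v ≤ min u v := by
  have h01 : (1:ℝ) ∈ Icc (0:ℝ) 1 := right_mem_Icc.2 zero_le_one
  have hleu := (hC.sub_mem_Icc_right hu hv h01 hv.2).1
  have hlev := (hC.sub_mem_Icc_left hu h01 hv hu.2).1
  obtain ⟨-, -, hu1, -⟩ := hC.2.1 u hu
  obtain ⟨-, -, -, hv1⟩ := hC.2.1 v hv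
  exact _root_.le_min (by linarith) (by linarith)

end IsCopula

lemma eventually_mul_mem_Icc_nhdsGT {u : ℝ} (hu : 0 ≤ u) :
    ∀ᶠ p in 𝓝[>] (0:ℝ), p * u ∈ Icc (0:ℝ) 1 := by
  have hlim : Tendsto (fun p : ℝ => p * u) (𝓝[>] 0) (𝓝 0) := by
    simpa using (continuous_mul_const u).continuousWithinAt.tendsto (x := 0) (s := Ioi 0)
  filter_upwards [self_mem_nhdsWithin, hlim (Iio_mem_nhds one_pos)] with p hp hp1
  exact ⟨mul_nonneg (le_of_lt hp) hu, le_of_lt hp1⟩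

lemma abs_sub_mul_div_eq {p : ℝ} (hp : 0 < p) (z w : ℝ) : |z - p * w| / p = |z / p - w| := by
  rw [← abs_of_pos hp, ← abs_div, abs_of_pos hp, sub_div, mul_div_cancel_left₀ _ hp.ne']

namespace HasTDF

variable {C Λ : ℝ → ℝ → ℝ}

lemma nonneg (hC : IsCopula C) (hΛ : HasTDF C Λ) {u v : ℝ} (hu : 0 ≤ u) (hv : 0 ≤ v) :
    0 ≤ Λ u v := by
  refine ge_of_tendsto (hΛ u v hu hv) ?_
  filter_upwards [eventually_mul_mem_Icc_nhdsGT hu, eventually_mul_mem_Icc_nhdsGT hv,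
    self_mem_nhdsWithin] with p hpu hpv (hp : 0 < p)
  exact div_nonneg (hC.nonneg hpu hpv) hp.le

lemma le_min (hC : IsCopula C) (hΛ : HasTDF C Λ) {u v : ℝ} (hu : 0 ≤ u) (hv : 0 ≤ v) :
    Λ u v ≤ min u v := by
  refine le_of_tendsto (hΛ u v hu hv) ?_
  filter_upwards [eventually_mul_mem_Icc_nhdsGT hu, eventually_mul_mem_Icc_nhdsGT hv,
    self_mem_nhdsWithin] with p hpu hpv (hp : 0 < p)
  rw [div_le_iff₀ hp, min_mul_of_nonneg _ _ hp.le, mul_comm u, mul_comm v]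
  exact hC.le_min hpu hpv

lemma tendsto_div (hC : IsCopula C) (hΛ : HasTDF C Λ) {x y : ℝ → ℝ} {a c : ℝ}
    (ha : 0 ≤ a) (hc : 0 ≤ c)
    (hxI : ∀ᶠ p in 𝓝[>] (0:ℝ), x p ∈ Icc (0:ℝ) 1) (hyI : ∀ᶠ p in 𝓝[>] (0:ℝ), y p ∈ Icc (0:ℝ) 1)
    (hx : Tendsto (fun p => x p / p) (𝓝[>] 0) (𝓝 a))
    (hy : Tendsto (fun p => y p / p) (𝓝[>] 0) (𝓝 c)) :
    Tendsto (fun p => C (x p) (y p) / p) (𝓝[>] 0) (𝓝 (Λ a c)) := by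
  have hbound : Tendsto (fun p => |x p / p - a| + |y p / p - c|) (𝓝[>] 0) (𝓝 0) := by
    simpa using ((hx.sub_const a).abs).add ((hy.sub_const c).abs)
  have hdiff : Tendsto (fun p => (C (x p) (y p) - C (p * a) (p * c)) / p) (𝓝[>] 0) (𝓝 0) := by
    refine squeeze_zero_norm' ?_ hbound
    filter_upwards [hxI, hyI, eventually_mul_mem_Icc_nhdsGT ha, eventually_mul_mem_Icc_nhdsGT hc,
      self_mem_nhdsWithin] with p hxp hyp hpa hpc (hp : 0 < p)
    calc ‖(C (x p) (y p) - C (p * a) (p * c)) / p‖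
        = |C (x p) (y p) - C (p * a) (p * c)| / p := by
          rw [Real.norm_eq_abs, abs_div, abs_of_pos hp]
      _ ≤ (|x p - p * a| + |y p - p * c|) / p := by
          gcongr; exact hC.abs_sub_le hxp hpa hyp hpc
      _ = |x p / p - a| + |y p / p - c| := by
          rw [add_div, abs_sub_mul_div_eq hp, abs_sub_mul_div_eq hp]
  simpa [sub_div] using hdiff.add (hΛ a c ha hc)

end HasTDF

theorem path_tail_dependence_coefficients_general (C Λ : ℝ → ℝ → ℝ)
    (hC : IsCopula C) (hΛ : HasTDF C Λ)
    (φ : ℝ → ℝ) (hrange : ∀ p ∈ Icc (0:ℝ) 1, p ^ 2 ≤ φ p ∧ φ p ≤ 1)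
    (b : ℝ) (hb0 : 0 < b)
    (hb : Tendsto (fun p => φ p / p) (nhdsWithin (0:ℝ) (Ioi 0)) (nhds b)) :
    Tendsto (fun p => C (φ p) (p ^ 2 / φ p) / p)
      (nhdsWithin (0:ℝ) (Ioi 0)) (nhds (Λ b (1 / b))) ∧
    Tendsto (fun p => C (φ p) (p ^ 2 / φ p) / min (φ p) (p ^ 2 / φ p))
      (nhdsWithin (0:ℝ) (Ioi 0)) (nhds (Λ b (1 / b) / min b (1 / b))) ∧
    0 ≤ Λ b (1 / b) ∧ Λ b (1 / b) ≤ Λ b (1 / b) / min b (1 / b) ∧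
    Λ b (1 / b) / min b (1 / b) ≤ 1 := by
  have hb' : 0 < 1 / b := one_div_pos.2 hb0
  have hm0 : 0 < min b (1 / b) := lt_min hb0 hb'
  have hm1 : min b (1 / b) ≤ 1 := by
    rcases le_total b 1 with h | h
    · exact min_le_of_left_le h
    · exact min_le_of_right_le ((div_le_one hb0).2 h)
  have hpath : ∀ᶠ p in 𝓝[>] (0:ℝ), 0 < p ∧ 0 < φ p ∧ φ p ≤ 1 ∧ p ^ 2 / φ p ≤ 1 := by
    filter_upwards [Ioo_mem_nhdsGT one_pos] with p hp
    obtain ⟨hφlow, hφ1⟩ := hrange p ⟨hp.1.le, hp.2.le⟩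
    have hφ0 : 0 < φ p := (pow_pos hp.1 2).trans_le hφlow
    exact ⟨hp.1, hφ0, hφ1, (div_le_one hφ0).2 hφlow⟩
  have hψ : Tendsto (fun p => p ^ 2 / φ p / p) (𝓝[>] 0) (𝓝 (1 / b)) := by
    refine (one_div b ▸ hb.inv₀ hb0.ne').congr' ?_
    filter_upwards [hpath] with p hp
    have hp0 : p ≠ 0 := hp.1.ne'
    field_simp
  have hχ := hΛ.tendsto_div hC hb0.le hb'.le
    (hpath.mono fun p h => ⟨h.2.1.le, h.2.2.1⟩)
    (hpath.mono fun p h => ⟨div_nonneg (sq_nonneg p) h.2.1.le, h.2.2.2⟩) hb hψ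
  have hmin : Tendsto (fun p => min (φ p) (p ^ 2 / φ p) / p) (𝓝[>] 0) (𝓝 (min b (1 / b))) :=
    (hb.min hψ).congr' (hpath.mono fun p h => min_div_div_right h.1.le _ _)
  have hκ := (hχ.div hmin hm0.ne').congr'
    (hpath.mono fun p h => div_div_div_cancel_right₀ h.1.ne' _ _)
  have hΛ0 := hΛ.nonneg hC hb0.le hb'.le
  exact ⟨hχ, hκ, hΛ0, le_div_self hΛ0 hm0 hm1, (div_le_one hm0).2 (hΛ.le_min hC hb0.le hb'.le)⟩

theorem path_tail_dependence_coefficients (C Λ : ℝ → ℝ → ℝ)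
    (hC : IsCopula C) (hΛ : HasTDF C Λ)
    (φ : ℝ → ℝ) (hrange : ∀ p ∈ Icc (0:ℝ) 1, p ^ 2 ≤ φ p ∧ φ p ≤ 1)
    (hcont : ∃ ε : ℝ, 0 < ε ∧ ContinuousOn φ (Ico 0 ε))
    (b : ℝ) (hb0 : 0 < b)
    (hb : Tendsto (fun p => φ p / p) (nhdsWithin (0:ℝ) (Ioi 0)) (nhds b)) :
    Tendsto (fun p => C (φ p) (p ^ 2 / φ p) / p)
      (nhdsWithin (0:ℝ) (Ioi 0)) (nhds (Λ b (1 / b))) ∧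
    Tendsto (fun p => C (φ p) (p ^ 2 / φ p) / min (φ p) (p ^ 2 / φ p))
      (nhdsWithin (0:ℝ) (Ioi 0)) (nhds (Λ b (1 / b) / min b (1 / b))) ∧
    0 ≤ Λ b (1 / b) ∧ Λ b (1 / b) ≤ Λ b (1 / b) / min b (1 / b) ∧
    Λ b (1 / b) / min b (1 / b) ≤ 1 :=
  path_tail_dependence_coefficients_general C Λ hC hΛ φ hrange b hb0 hb
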